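/- arXiv:1305.2973 — 2 statements merged into one kernel-verified Lean document; each statement's English description precedes it below -/
import Mathlib

section
/- With ρ : S³ → D² defined as ρ(z,w) = √2·w·λ(|w|)/|w| for w ≠ 0 and ρ(z,0) = 0 (where λ is as in the construction), the preimage ρ⁻¹(∂D²) equals T₁ = {(z,w) ∈ S³ : |z| ≤ 1/√2}, and the closure of ρ⁻¹(int D²) equals T₂ = {(z,w) ∈ S³ : |w| ≤ 1/√2}. -/
open Set Metric

/-- The unit 3-sphere `S³ = {(z,w) ∈ ℂ² : |z|² + |w|² = 1}`. -/
def S3 : Set (ℂ × ℂ) := {p | ‖p.1‖ ^ 2 + ‖p.2‖ ^ 2 = 1}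

/-- The solid torus `T₁ = {(z,w) ∈ S³ : |z| ≤ 1/√2}`. -/
def T1 : Set (ℂ × ℂ) := {p ∈ S3 | ‖p.1‖ ≤ 1 / Real.sqrt 2}

/-- The solid torus `T₂ = {(z,w) ∈ S³ : |w| ≤ 1/√2}`. -/
def T2 : Set (ℂ × ℂ) := {p ∈ S3 | ‖p.2‖ ≤ 1 / Real.sqrt 2}

/-- For `ρ : S³ → D²` defined by `ρ(z,w) = √2·w·l(|w|)/|w|` (`ρ(z,0)=0`), the preimage of the
boundary circle `∂D²` is `T₁`, and the closure of the preimage of the open disk is `T₂`. -/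
theorem rho_preimages
    (l : ℝ → ℝ)
    (hl_smooth : ContDiffOn ℝ (⊤ : ℕ∞) l (Icc 0 1))
    (hl_range : ∀ t ∈ Icc (0:ℝ) 1, l t ∈ Icc (0:ℝ) 1)
    (hl_id : ∀ t ∈ Icc (0:ℝ) (1/4), l t = t)
    (hl_const : ∀ t ∈ Icc (1 / Real.sqrt 2) 1, l t = 1 / Real.sqrt 2)
    (hl_deriv : ∀ t ∈ Ico (0:ℝ) (1 / Real.sqrt 2), 0 < derivWithin l (Icc 0 1) t)
    (ρ : ℂ × ℂ → ℂ)
    (hρ : ∀ p : ℂ × ℂ,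
      ρ p = if p.2 = 0 then 0
        else ((Real.sqrt 2 * l (‖p.2‖) / ‖p.2‖ : ℝ) : ℂ) * p.2) :
    {p ∈ S3 | ‖ρ p‖ = 1} = T1 ∧
    closure {p ∈ S3 | ‖ρ p‖ < 1} = T2 := by
  have hs2 : (0:ℝ) < Real.sqrt 2 := Real.sqrt_pos.mpr (by norm_num)
  set c : ℝ := 1 / Real.sqrt 2 with hc_def
  have hc0 : 0 < c := by positivity
  have hcsq : c ^ 2 = 1 / 2 := by
    rw [hc_def, div_pow, one_pow, Real.sq_sqrt (by norm_num : (0:ℝ) ≤ 2)]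
  have hc1 : c < 1 := by nlinarith
  have hs2c : Real.sqrt 2 * c = 1 := by
    rw [hc_def]; field_simp
  -- l c = c
  have hlc : l c = c := hl_const c ⟨le_refl c, hc1.le⟩
  -- strict monotonicity of l on Icc 0 c
  have hmono : StrictMonoOn l (Icc 0 c) := by
    apply strictMonoOn_of_deriv_pos (convex_Icc 0 c)
      (hl_smooth.continuousOn.mono (Icc_subset_Icc le_rfl hc1.le))
    intro x hx
    rw [interior_Icc] at hx
    have hnhds : Icc (0:ℝ) 1 ∈ nhds x :=
      Icc_mem_nhds (by linarith [hx.1]) (by linarith [hx.2])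
    have := hl_deriv x ⟨hx.1.le, hx.2⟩
    rwa [derivWithin_of_mem_nhds hnhds] at this
  have hl_lt : ∀ t ∈ Icc (0:ℝ) 1, (l t < c ↔ t < c) := by
    intro t ht
    constructor
    · intro h
      by_contra hge
      push_neg at hge
      rw [hl_const t ⟨hge, ht.2⟩] at h
      exact lt_irrefl c h
    · intro h
      calc l t < l c := hmono ⟨ht.1, h.le⟩ ⟨hc0.le, le_rfl⟩ h
        _ = c := hlc
  have hl_le : ∀ t ∈ Icc (0:ℝ) 1, l t ≤ c := by
    intro t ht
    rcases lt_or_ge t c with h | h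
    · exact ((hl_lt t ht).mpr h).le
    · exact (hl_const t ⟨h, ht.2⟩).le
  -- basic facts on S3
  have habs2 : ∀ p : ℂ × ℂ, p ∈ S3 → ‖p.2‖ ≤ 1 := by
    intro p hp
    have hp' : ‖p.1‖ ^ 2 + ‖p.2‖ ^ 2 = 1 := hp
    nlinarith [norm_nonneg p.1, norm_nonneg p.2]
  -- value of |ρ p| when p.2 ≠ 0
  have hrho : ∀ p : ℂ × ℂ, p ∈ S3 → p.2 ≠ 0 →
      ‖(ρ p)‖ = Real.sqrt 2 * l (‖p.2‖) := by
    intro p hp hw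
    have hwpos : 0 < ‖p.2‖ := norm_pos_iff.mpr hw
    have hl0 : 0 ≤ l (‖p.2‖) :=
      (hl_range _ ⟨hwpos.le, habs2 p hp⟩).1
    rw [hρ p, if_neg hw, norm_mul, Complex.norm_real, Real.norm_eq_abs,
      abs_of_nonneg (by positivity)]
    field_simp
  -- relation |z| ≤ c ↔ c ≤ |w| on S3
  have hzw : ∀ p : ℂ × ℂ, p ∈ S3 → (‖p.1‖ ≤ c ↔ c ≤ ‖p.2‖) := by
    intro p hp
    have hp' : ‖p.1‖ ^ 2 + ‖p.2‖ ^ 2 = 1 := hp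
    have h1 : (0:ℝ) ≤ ‖p.1‖ := norm_nonneg p.1
    have h2 : (0:ℝ) ≤ ‖p.2‖ := norm_nonneg p.2
    constructor
    · intro h; nlinarith
    · intro h; nlinarith
  constructor
  · -- first part
    ext p
    simp only [mem_sep_iff, T1]
    refine and_congr_right fun hp => ?_
    rcases eq_or_ne p.2 0 with hw | hw
    · have hz : ‖p.1‖ = 1 := by
        have hp' : ‖p.1‖ ^ 2 + ‖p.2‖ ^ 2 = 1 := hp
        rw [hw] at hp'
        have h2 : ‖p.1‖ ^ 2 = 1 := by simpa using hp'
        nlinarith [norm_nonneg p.1]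
      rw [hρ p, if_pos hw]
      simp only [norm_zero]
      constructor
      · intro h; norm_num at h
      · intro h; rw [hz] at h; linarith
    · rw [hrho p hp hw]
      have hwmem : ‖p.2‖ ∈ Icc (0:ℝ) 1 := ⟨norm_nonneg _, habs2 p hp⟩
      constructor
      · intro h
        have hlec : l (‖p.2‖) = c := by
          have := hs2c
          exact mul_left_cancel₀ hs2.ne' (h.trans this.symm)
        have : ¬ (‖p.2‖ < c) := by
          intro hlt
          have := (hl_lt _ hwmem).mpr hlt
          rw [hlec] at this; exact lt_irrefl c this
        exact (hzw p hp).mpr (not_lt.mp this)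
      · intro h
        have hcw : c ≤ ‖p.2‖ := (hzw p hp).mp h
        rw [hl_const _ ⟨hcw, hwmem.2⟩]
        exact hs2c
  · -- second part
    have hset : {p ∈ S3 | ‖(ρ p)‖ < 1} = {p ∈ S3 | ‖p.2‖ < c} := by
      ext p
      simp only [mem_sep_iff]
      refine and_congr_right fun hp => ?_
      rcases eq_or_ne p.2 0 with hw | hw
      · rw [hρ p, if_pos hw, norm_zero, hw, norm_zero]
        simp [hc0]
      · rw [hrho p hp hw]
        have hwmem : ‖p.2‖ ∈ Icc (0:ℝ) 1 := ⟨norm_nonneg _, habs2 p hp⟩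
        rw [← hl_lt _ hwmem]
        constructor
        · intro h; nlinarith [hl_le _ hwmem]
        · intro h; nlinarith
    rw [hset]
    have hS3closed : IsClosed S3 := by
      have : S3 = (fun p : ℂ × ℂ => ‖p.1‖ ^ 2 + ‖p.2‖ ^ 2) ⁻¹' {1} := rfl
      rw [this]
      exact IsClosed.preimage
        (((continuous_norm.comp continuous_fst).pow 2).add
          ((continuous_norm.comp continuous_snd).pow 2)) isClosed_singleton
    have hT2closed : IsClosed T2 := by
      have : T2 = S3 ∩ {p : ℂ × ℂ | ‖p.2‖ ≤ c} := rfl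
      rw [this]
      exact hS3closed.inter (isClosed_le (continuous_norm.comp continuous_snd) continuous_const)
    apply le_antisymm
    · exact closure_minimal (fun p hp => ⟨hp.1, hp.2.le⟩) hT2closed
    · intro p hp
      obtain ⟨hpS, hpw⟩ := hp
      rcases lt_or_eq_of_le hpw with h | h
      · exact subset_closure ⟨hpS, h⟩
      · -- boundary case |w| = c
        have hp' : ‖p.1‖ ^ 2 + ‖p.2‖ ^ 2 = 1 := hpS
        have hz : ‖p.1‖ = c := by nlinarith [norm_nonneg p.1]
        set g : ℝ → ℂ × ℂ := fun t =>
          (((Real.sqrt (1 - t ^ 2 * c ^ 2) / c : ℝ) : ℂ) * p.1, ((t : ℝ) : ℂ) * p.2) with hg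
        have hg1 : g 1 = p := by
          have hsq : Real.sqrt (1 - 1 ^ 2 * c ^ 2) = c := by
            rw [one_pow, one_mul, hcsq, show (1:ℝ) - 1/2 = 2⁻¹ by norm_num,
              Real.sqrt_inv, hc_def, one_div]
          simp only [hg]
          rw [hsq, div_self hc0.ne']
          simp
        have hcont : Continuous g := by
          apply Continuous.prodMk
          · exact (Complex.continuous_ofReal.comp
              ((Real.continuous_sqrt.comp
                (continuous_const.sub ((continuous_pow 2).mul continuous_const))).div_const c)).mul
              continuous_const
          · exact Complex.continuous_ofReal.mul continuous_const
        have htend : Filter.Tendsto g (nhdsWithin 1 (Iio 1)) (nhds p) := by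
          rw [← hg1]
          exact (hcont.tendsto 1).mono_left nhdsWithin_le_nhds
        apply mem_closure_of_tendsto htend
        filter_upwards [Ioo_mem_nhdsLT_of_mem (⟨zero_lt_one, le_rfl⟩ : (1:ℝ) ∈ Ioc 0 1)]
          with t ht
        obtain ⟨ht0, ht1⟩ := ht
        have h1mt : 0 ≤ 1 - t ^ 2 * c ^ 2 := by nlinarith
        have habsfst : ‖(g t).1‖ = Real.sqrt (1 - t ^ 2 * c ^ 2) := by
          simp only [hg, norm_mul, Complex.norm_real, Real.norm_eq_abs, hz]
          rw [abs_of_nonneg (by positivity)]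
          field_simp
        have habssnd : ‖(g t).2‖ = t * c := by
          simp only [hg, norm_mul, Complex.norm_real, Real.norm_eq_abs, h, ← hc_def]
          rw [abs_of_nonneg ht0.le]
        refine ⟨?_, ?_⟩
        · show ‖(g t).1‖ ^ 2 + ‖(g t).2‖ ^ 2 = 1
          rw [habsfst, habssnd, Real.sq_sqrt h1mt]
          ring
        · show ‖(g t).2‖ < c
          rw [habssnd]
          nlinarith
end

section
/- For each θ ∈ S¹ and each r ∈ (0,1), the fiber ρ⁻¹(r·e^{iθ}) of the map ρ : S³ → D² (defined by ρ(z,w) = √2·w·λ(|w|)/|w| for w ≠ 0, ρ(z,0) = 0) is the circle {(z, s·e^{iθ}) : |z|² + s² = 1}, where s = λ⁻¹(r/√2) ∈ (0, 1/√2) is the unique preimage of r/√2 under λ restricted to [0, 1/√2). In particular, every fiber of ρ over a nonzero interior point of D² is homeomorphic to S¹. -/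
open Set Metric

lemma circle_homeo (R : ℝ) (hR : 0 < R) (c : ℂ) :
    Nonempty (↥{p : ℂ × ℂ | ‖p.1‖ = R ∧ p.2 = c} ≃ₜ ↥(sphere (0:ℂ) 1)) := by
  refine ⟨{
    toFun := fun p => ⟨p.1.1 / R, by
      have h1 : ‖p.1.1‖ = R := p.2.1
      simp [mem_sphere_zero_iff_norm, norm_div, h1,
        Complex.norm_real, Real.norm_eq_abs, abs_of_pos hR, div_self hR.ne']⟩
    invFun := fun z => ⟨((R:ℂ) * z.1, c), by
      have h1 : ‖z.1‖ = 1 := mem_sphere_zero_iff_norm.mp z.2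
      constructor
      · simp [norm_mul, Complex.norm_real, Real.norm_eq_abs, abs_of_pos hR, h1]
      · rfl⟩
    left_inv := fun p => by
      have hRne : (R:ℂ) ≠ 0 := by exact_mod_cast hR.ne'
      ext
      · exact mul_div_cancel₀ _ hRne
      · exact p.2.2.symm
    right_inv := fun z => by
      have hRne : (R:ℂ) ≠ 0 := by exact_mod_cast hR.ne'
      ext
      exact mul_div_cancel_left₀ _ hRne
    continuous_toFun := by
      exact Continuous.subtype_mk ((continuous_fst.comp continuous_subtype_val).div_const _) _
    continuous_invFun := by
      exact Continuous.subtype_mk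
        ((continuous_const.mul continuous_subtype_val).prodMk continuous_const) _ }⟩

/-- For each angle `θ` and radius `r ∈ (0,1)`, the fiber of `ρ : S³ → D²` over `r·e^{iθ}`
is the circle `{(z, s·e^{iθ}) : |z|² + s² = 1}` where `s ∈ (0,1/√2)` is the unique
preimage of `r/√2` under `λ` on `[0,1/√2]`; in particular this fiber is homeomorphic to
`S¹`. -/
theorem rho_fibers_are_circles
    (l : ℝ → ℝ)
    (hl_smooth : ContDiffOn ℝ (⊤ : ℕ∞) l (Icc 0 1))
    (hl_range : ∀ t ∈ Icc (0:ℝ) 1, l t ∈ Icc (0:ℝ) 1)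
    (hl_id : ∀ t ∈ Icc (0:ℝ) (1/4), l t = t)
    (hl_const : ∀ t ∈ Icc (1 / Real.sqrt 2) 1, l t = 1 / Real.sqrt 2)
    (hl_deriv : ∀ t ∈ Ico (0:ℝ) (1 / Real.sqrt 2), 0 < derivWithin l (Icc 0 1) t)
    (ρ : ℂ × ℂ → ℂ)
    (hρ : ∀ p : ℂ × ℂ,
      ρ p = if p.2 = 0 then 0
        else ((Real.sqrt 2 * l (‖p.2‖) / ‖p.2‖ : ℝ) : ℂ) * p.2)
    (θ r : ℝ) (hr : r ∈ Ioo (0:ℝ) 1) :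
    ∃ s ∈ Ioo (0:ℝ) (1 / Real.sqrt 2),
      l s = r / Real.sqrt 2 ∧
      (∀ s' ∈ Icc (0:ℝ) (1 / Real.sqrt 2), l s' = r / Real.sqrt 2 → s' = s) ∧
      {p ∈ S3 | ρ p = (r : ℂ) * Complex.exp ((θ : ℂ) * Complex.I)} =
        {p : ℂ × ℂ | ‖p.1‖ ^ 2 + s ^ 2 = 1 ∧
          p.2 = (s : ℂ) * Complex.exp ((θ : ℂ) * Complex.I)} ∧
      Nonempty (↥{p ∈ S3 | ρ p = (r : ℂ) * Complex.exp ((θ : ℂ) * Complex.I)} ≃ₜ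
        ↥(sphere (0:ℂ) 1)) := by
  have hs2 : (0:ℝ) < Real.sqrt 2 := by positivity
  have hs2sq : Real.sqrt 2 ^ 2 = 2 := Real.sq_sqrt (by norm_num)
  set a : ℝ := 1 / Real.sqrt 2 with ha_def
  have ha0 : (0:ℝ) < a := by positivity
  have ha1 : a < 1 := by
    rw [ha_def, div_lt_one hs2]
    nlinarith
  have hsub : Icc (0:ℝ) a ⊆ Icc 0 1 := Icc_subset_Icc le_rfl ha1.le
  -- strict monotonicity on [0, a]
  have hmono : StrictMonoOn l (Icc (0:ℝ) a) := by
    apply strictMonoOn_of_deriv_pos (convex_Icc _ _)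
      (hl_smooth.continuousOn.mono hsub)
    intro x hx
    rw [interior_Icc] at hx
    have hmem : Icc (0:ℝ) 1 ∈ nhds x := Icc_mem_nhds hx.1 (hx.2.trans ha1)
    have := hl_deriv x ⟨hx.1.le, hx.2⟩
    rwa [derivWithin_of_mem_nhds hmem] at this
  have hl0 : l 0 = 0 := hl_id 0 ⟨le_rfl, by norm_num⟩
  have hla : l a = a := hl_const a ⟨le_rfl, ha1.le⟩
  have hra : r / Real.sqrt 2 ∈ Icc (l 0) (l a) := by
    rw [hl0, hla, ha_def]
    refine ⟨div_nonneg hr.1.le hs2.le, ?_⟩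
    gcongr
    exact hr.2.le
  -- existence of s by IVT
  obtain ⟨s, hsIcc, hls⟩ :=
    intermediate_value_Icc ha0.le (hl_smooth.continuousOn.mono hsub) hra
  have hr2pos : 0 < r / Real.sqrt 2 := div_pos hr.1 hs2
  have hr2lt : r / Real.sqrt 2 < a := by
    rw [ha_def]
    exact (div_lt_div_iff₀ hs2 hs2).mpr (by nlinarith [hr.2])
  have hs_ne0 : s ≠ 0 := by
    intro h; rw [h, hl0] at hls; exact hr2pos.ne hls
  have hs_nea : s ≠ a := by
    intro h; rw [h, hla] at hls; exact hr2lt.ne hls.symm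
  have hsIoo : s ∈ Ioo (0:ℝ) a :=
    ⟨hsIcc.1.lt_of_ne (Ne.symm hs_ne0), hsIcc.2.lt_of_ne hs_nea⟩
  have huniq : ∀ s' ∈ Icc (0:ℝ) a, l s' = r / Real.sqrt 2 → s' = s := by
    intro s' hs' hls'
    exact hmono.injOn hs' hsIcc (hls'.trans hls.symm)
  refine ⟨s, hsIoo, hls, huniq, ?_, ?_⟩
  -- abbreviations
  all_goals {
    set c : ℂ := Complex.exp ((θ : ℂ) * Complex.I) with hc_def
    have habs_c : ‖c‖ = 1 := Complex.norm_exp_ofReal_mul_I θ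
    have hc_ne : c ≠ 0 := Complex.exp_ne_zero _
    have heq : {p ∈ S3 | ρ p = (r : ℂ) * c} =
        {p : ℂ × ℂ | ‖p.1‖ ^ 2 + s ^ 2 = 1 ∧ p.2 = (s : ℂ) * c} := by
      ext p
      simp only [mem_setOf_eq, S3]
      constructor
      · rintro ⟨hS3, hval⟩
        have hrc_ne : (r:ℂ) * c ≠ 0 :=
          mul_ne_zero (by exact_mod_cast hr.1.ne') hc_ne
        have hw_ne : p.2 ≠ 0 := by
          intro h
          rw [hρ p, if_pos h] at hval
          exact hrc_ne hval.symm
        rw [hρ p, if_neg hw_ne] at hval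
        set t : ℝ := ‖p.2‖ with ht_def
        have ht_pos : 0 < t := by
          rw [ht_def]; exact norm_pos_iff.mpr hw_ne
        have ht_le1 : t ≤ 1 := by
          nlinarith [sq_nonneg ‖p.1‖, ht_pos]
        have hlt_nonneg : 0 ≤ l t := (hl_range t ⟨ht_pos.le, ht_le1⟩).1
        -- take absolute values
        have habs : Real.sqrt 2 * l t / t * t = r := by
          have := congrArg (‖·‖) hval
          rw [norm_mul, norm_mul, Complex.norm_real, Complex.norm_real, Real.norm_eq_abs, Real.norm_eq_abs, habs_c,
            abs_of_nonneg (by positivity : (0:ℝ) ≤ Real.sqrt 2 * l t / t),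
            abs_of_pos hr.1, mul_one, ← ht_def] at this
          exact this
        rw [div_mul_cancel₀ _ ht_pos.ne'] at habs
        have hlt : l t = r / Real.sqrt 2 := by
          field_simp
          linarith [habs]
        have ht_le_a : t ≤ a := by
          by_contra h
          push_neg at h
          have := hl_const t ⟨h.le, ht_le1⟩
          rw [this] at hlt
          exact hr2lt.ne hlt.symm
        have ht_eq : t = s := huniq t ⟨ht_pos.le, ht_le_a⟩ hlt
        -- now deduce p.2 = s * c
        have hcoef : (Real.sqrt 2 * l t / t : ℝ) = r / s := by
          rw [hlt, ht_eq]
          field_simp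
        have hw : p.2 = (s : ℂ) * c := by
          have hval' : ((r / s : ℝ) : ℂ) * p.2 = (r : ℂ) * c := by
            rw [← hcoef]; exact hval
          have hrne : (r:ℂ) ≠ 0 := by exact_mod_cast hr.1.ne'
          have hsne : (s:ℂ) ≠ 0 := by exact_mod_cast hs_ne0
          push_cast at hval'
          calc p.2 = ((s:ℂ)/r) * ((r/(s:ℂ)) * p.2) := by field_simp
            _ = ((s:ℂ)/r) * ((r:ℂ) * c) := by rw [hval']
            _ = (s:ℂ) * c := by field_simp
        refine ⟨?_, hw⟩
        rw [← ht_eq]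
        exact hS3
      · rintro ⟨hcirc, hw⟩
        have habs_w : ‖p.2‖ = s := by
          rw [hw, norm_mul, Complex.norm_real, Real.norm_eq_abs, habs_c, mul_one,
            abs_of_pos hsIoo.1]
        have hw_ne : p.2 ≠ 0 := by
          rw [hw]
          exact mul_ne_zero (by exact_mod_cast hs_ne0) hc_ne
        constructor
        · rw [habs_w]; exact hcirc
        · rw [hρ p, if_neg hw_ne, habs_w, hls, hw]
          have : (Real.sqrt 2 * (r / Real.sqrt 2) / s : ℝ) = r / s := by
            field_simp
          rw [this]
          have hsne : (s:ℂ) ≠ 0 := by exact_mod_cast hs_ne0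
          push_cast
          field_simp
    first
    | exact heq
    | {
      rw [heq]
      have hRpos : 0 < Real.sqrt (1 - s ^ 2) := by
        apply Real.sqrt_pos.mpr
        nlinarith [hsIoo.1, hsIoo.2.trans ha1]
      have heq2 : {p : ℂ × ℂ | ‖p.1‖ ^ 2 + s ^ 2 = 1 ∧ p.2 = (s : ℂ) * c} =
          {p : ℂ × ℂ | ‖p.1‖ = Real.sqrt (1 - s ^ 2) ∧ p.2 = (s : ℂ) * c} := by
        ext p
        simp only [mem_setOf_eq]
        constructor
        · rintro ⟨h1, h2⟩
          refine ⟨?_, h2⟩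
          rw [show (1 : ℝ) - s ^ 2 = ‖p.1‖ ^ 2 by linarith,
            Real.sqrt_sq (norm_nonneg _)]
        · rintro ⟨h1, h2⟩
          refine ⟨?_, h2⟩
          rw [h1, Real.sq_sqrt (by nlinarith [hsIoo.1, hsIoo.2.trans ha1])]
          ring
      rw [heq2]
      exact circle_homeo _ hRpos _
    }
  }
end
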